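/- Let G be a Hausdorff topological abelian group such that every countable subgroup of G is h-embedded in G. Then G is sequentially closed in its completion ϱG, i.e., no sequence of elements of G converges in ϱG to a point of ϱG ∖ G. -/

import Mathlib

open Topology Filter Set

noncomputable section

/-- A topological space is *pseudocompact* if every continuous real-valued function
defined on it is bounded. -/
def IsPseudocompact (X : Type*) [TopologicalSpace X] : Prop :=
  ∀ f : X → ℝ, Continuous f → Bornology.IsBounded (Set.range f)

/-- A subgroup `D` of a topological abelian group `G` is *h-embedded* in `G` if every
(not necessarily continuous) homomorphism from `D` to the circle group extends to a
continuous homomorphism from `G` to the circle group. -/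
def IsHEmbedded {G : Type*} [CommGroup G] [TopologicalSpace G] (D : Subgroup G) : Prop :=
  ∀ f : D →* Circle, ∃ g : G →* Circle, Continuous g ∧ ∀ x : D, g x = f x

/-- The canonical evaluation homomorphism `α_G : G → G^∧∧`, `α_G(x)(χ) = χ(x)`,
where the dual groups carry the compact-open topology.  `G` is *reflexive* when this
map is a topological isomorphism, i.e. `IsHomeomorph ⇑(pontrEval G)`. -/
def pontrEval (G : Type*) [CommGroup G] [TopologicalSpace G] :
    G →* PontryaginDual (PontryaginDual G) where
  toFun x :=
    { toFun := fun χ => χ x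
      map_one' := rfl
      map_mul' := fun χ ψ => rfl
      continuous_toFun := by
        have h : Continuous fun χ : PontryaginDual G => χ.toContinuousMap x :=
          (continuous_eval_const x).comp
            (ContinuousMonoidHom.isInducing_toContinuousMap G Circle).continuous
        exact h }
  map_one' := ContinuousMonoidHom.ext fun χ => map_one χ
  map_mul' x y := ContinuousMonoidHom.ext fun χ => map_mul χ x y

/-!
If `e (u n) → y`, the quotients `w n = u (n + 1) * (u n)⁻¹` tend to `1` in `G`, so every character
of the countable subgroup `H` they generate, being the restriction of a continuous character of
`G`, sends `w n` to `1`. The characters of the discrete group `H` form a compact group on which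
the evaluations at `w n` are characters converging pointwise to `1`; by dominated convergence
their Haar integrals tend to `1`, whereas a nontrivial character has integral `0`. Hence
`w n = 1` eventually, so `u` is eventually constant and `y ∈ e(G)`.
-/

open MeasureTheory

def AddCircle.ratToReal : AddCircle (1 : ℚ) →+ AddCircle (1 : ℝ) :=
  QuotientAddGroup.map _ _ (Rat.castHom ℝ).toAddMonoidHom <| by
    rw [AddSubgroup.zmultiples_le]
    exact ⟨1, by simp⟩

theorem AddCircle.ratToReal_injective : Function.Injective AddCircle.ratToReal := by
  rw [injective_iff_map_eq_zero]
  intro x hx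
  induction x using QuotientAddGroup.induction_on with
  | H q =>
  obtain ⟨n, hn⟩ := (AddCircle.coe_eq_zero_iff (1 : ℝ)).mp hx
  exact (AddCircle.coe_eq_zero_iff 1).mpr ⟨n, by
    simp only [zsmul_one, RingHom.toAddMonoidHom_eq_coe, AddMonoidHom.coe_coe,
      Rat.coe_castHom] at hn ⊢
    exact_mod_cast hn⟩

theorem exists_monoidHom_circle_apply_ne_one {A : Type*} [CommGroup A] {a : A} (ha : a ≠ 1) :
    ∃ χ : A →* Circle, χ a ≠ 1 := by
  obtain ⟨c, hc⟩ :=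
    CharacterModule.exists_character_apply_ne_zero_of_ne_zero (a := Additive.ofMul a) ha
  let ψ : Additive A →+ AddCircle (1 : ℝ) := AddCircle.ratToReal.comp c
  refine ⟨MonoidHom.mk' (fun x ↦ AddCircle.toCircle (ψ (Additive.ofMul x)))
    fun x y ↦ by simp only [ofMul_mul, map_add, AddCircle.toCircle_add], ?_⟩
  rw [MonoidHom.mk'_apply, ← AddCircle.toCircle_zero, ne_eq,
    show ψ (Additive.ofMul a) = AddCircle.ratToReal (c (Additive.ofMul a)) from rfl,
    (AddCircle.injective_toCircle one_ne_zero).eq_iff,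
    ← map_zero AddCircle.ratToReal, AddCircle.ratToReal_injective.eq_iff]
  exact hc

section CharacterIntegral

variable {X : Type*} [Group X] [MeasurableSpace X] [MeasurableMul X] (μ : Measure X)
  [μ.IsMulLeftInvariant]

theorem integral_monoidHom_circle_eq_zero {φ : X →* Circle} (hφ : φ ≠ 1) :
    ∫ x, (φ x : ℂ) ∂μ = 0 := by
  obtain ⟨g, hg⟩ : ∃ g, φ g ≠ 1 := by simpa [DFunLike.ext_iff] using hφ
  have htranslate : (φ g : ℂ) * ∫ x, (φ x : ℂ) ∂μ = ∫ x, (φ x : ℂ) ∂μ := by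
    simpa [← integral_const_mul] using integral_mul_left_eq_self (fun x ↦ (φ x : ℂ)) g
  have hg' : (φ g : ℂ) - 1 ≠ 0 := sub_ne_zero.mpr (Circle.coe_injective.ne hg)
  exact (mul_eq_zero.mp (by rw [sub_mul, htranslate, one_mul, sub_self])).resolve_left hg'

theorem eventually_eq_one_of_tendsto_monoidHom_circle [IsProbabilityMeasure μ]
    {φ : ℕ → X →* Circle} (hmeas : ∀ n, AEStronglyMeasurable (fun x ↦ (φ n x : ℂ)) μ)
    (hlim : ∀ x, Tendsto (fun n ↦ φ n x) atTop (𝓝 1)) : ∀ᶠ n in atTop, φ n = 1 := by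
  have hint : Tendsto (fun n ↦ ∫ x, (φ n x : ℂ) ∂μ) atTop (𝓝 (∫ _, (1 : ℂ) ∂μ)) :=
    tendsto_integral_of_dominated_convergence (fun _ ↦ 1) hmeas (integrable_const 1)
      (fun n ↦ .of_forall fun x ↦ (Circle.norm_coe _).le)
      (.of_forall fun x ↦ (continuous_subtype_val.tendsto 1).comp (hlim x))
  rw [integral_const, probReal_univ, one_smul] at hint
  filter_upwards [hint.eventually_ne one_ne_zero] with n hn
  by_contra hφ
  exact hn (integral_monoidHom_circle_eq_zero μ hφ)

end CharacterIntegral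

theorem eventually_eq_one_of_forall_tendsto_monoidHom_circle {A : Type*} [CommGroup A]
    {a : ℕ → A} (h : ∀ χ : A →* Circle, Tendsto (fun n ↦ χ (a n)) atTop (𝓝 1)) :
    ∀ᶠ n in atTop, a n = 1 := by
  let X := (MonoidHom.coeFn A Circle).range
  have : CompactSpace X :=
    isCompact_iff_compactSpace.mp (MonoidHom.isClosed_range_coe A Circle).isCompact
  let _ : MeasurableSpace X := borel X
  have : BorelSpace X := ⟨rfl⟩
  have : IsProbabilityMeasure (Measure.haarMeasure (⊤ : TopologicalSpace.PositiveCompacts X)) :=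
    ⟨Measure.haarMeasure_self⟩
  let eval : ℕ → X →* Circle := fun n ↦ (Pi.evalMonoidHom _ (a n)).comp X.subtype
  have hcont : ∀ n, Continuous fun x ↦ (eval n x : ℂ) := fun n ↦
    continuous_subtype_val.comp ((continuous_apply (a n)).comp continuous_subtype_val)
  have heval := eventually_eq_one_of_tendsto_monoidHom_circle (Measure.haarMeasure ⊤)
    (fun n ↦ (hcont n).aestronglyMeasurable) (by rintro ⟨_, χ, rfl⟩; exact h χ)
  filter_upwards [heval] with n hn
  by_contra ha
  obtain ⟨χ, hχ⟩ := exists_monoidHom_circle_apply_ne_one ha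
  exact hχ (DFunLike.congr_fun hn ⟨χ, χ, rfl⟩)

theorem Subgroup.countable_closure_range {G ι : Type*} [Group G] [Countable ι] (f : ι → G) :
    (Subgroup.closure (Set.range f) : Set G).Countable := by
  rw [← FreeGroup.range_lift_eq_closure, MonoidHom.coe_range]
  exact Set.countable_range _

theorem eventually_eq_one_of_tendsto_one_of_isHEmbedded {G : Type*} [CommGroup G]
    [TopologicalSpace G] {w : ℕ → G} (hw : Tendsto w atTop (𝓝 1))
    (hH : IsHEmbedded (Subgroup.closure (Set.range w))) : ∀ᶠ n in atTop, w n = 1 := by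
  let H := Subgroup.closure (Set.range w)
  let w' : ℕ → H := fun n ↦ ⟨w n, Subgroup.subset_closure (Set.mem_range_self n)⟩
  have hchar : ∀ χ : H →* Circle, Tendsto (fun n ↦ χ (w' n)) atTop (𝓝 1) := by
    intro χ
    obtain ⟨g, hg, hgχ⟩ := hH χ
    exact (map_one g ▸ (hg.tendsto 1).comp hw).congr fun n ↦ hgχ (w' n)
  filter_upwards [eventually_eq_one_of_forall_tendsto_monoidHom_circle hchar] with n hn
  exact congrArg Subtype.val hn

theorem statement4_general (G ϱG : Type*) [CommGroup G] [TopologicalSpace G]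
    [CommGroup ϱG] [TopologicalSpace ϱG] [IsTopologicalGroup ϱG] [T2Space ϱG]
    (e : G →* ϱG) (he : Topology.IsEmbedding ⇑e)
    (hemb : ∀ H : Subgroup G, (H : Set G).Countable → IsHEmbedded H) :
    ∀ (u : ℕ → G) (y : ϱG),
      Filter.Tendsto (fun n => e (u n)) Filter.atTop (nhds y) → y ∈ Set.range ⇑e := by
  intro u y hy
  have hstep : Tendsto (fun n ↦ u (n + 1) * (u n)⁻¹) atTop (𝓝 1) := by
    rw [he.tendsto_nhds_iff, map_one, ← mul_inv_cancel y]
    simpa [Function.comp_def] using ((tendsto_add_atTop_iff_nat 1).mpr hy).mul hy.inv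
  obtain ⟨N, hN⟩ := eventually_atTop.mp <| eventually_eq_one_of_tendsto_one_of_isHEmbedded hstep
    (hemb _ (Subgroup.countable_closure_range _))
  have hconst : ∀ n ≥ N, u n = u N := fun n hn ↦ Nat.le_induction rfl
    (fun m hm ih ↦ (mul_inv_eq_one.mp (hN m hm)).trans ih) n hn
  refine ⟨u N, tendsto_nhds_unique (tendsto_const_nhds.congr' ?_) hy⟩
  filter_upwards [eventually_ge_atTop N] with n hn
  rw [hconst n hn]

/-- A Hausdorff topological abelian group all of whose countable subgroups are
h-embedded is sequentially closed in its completion `ϱG` (here `ϱG` is formalized as any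
complete Hausdorff topological abelian group in which `G` embeds as a dense topological
subgroup): no sequence of elements of `G` converges in `ϱG` to a point outside `G`. -/
theorem statement4 (G ϱG : Type*) [CommGroup G] [TopologicalSpace G] [IsTopologicalGroup G]
    [T2Space G] [CommGroup ϱG] [TopologicalSpace ϱG] [IsTopologicalGroup ϱG] [T2Space ϱG]
    (hcomplete : @CompleteSpace ϱG (IsTopologicalGroup.rightUniformSpace ϱG))
    (e : G →* ϱG) (he : Topology.IsEmbedding ⇑e) (hdense : DenseRange ⇑e)
    (hemb : ∀ H : Subgroup G, (H : Set G).Countable → IsHEmbedded H) :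
    ∀ (u : ℕ → G) (y : ϱG),
      Filter.Tendsto (fun n => e (u n)) Filter.atTop (nhds y) → y ∈ Set.range ⇑e :=
  statement4_general G ϱG e he hemb

end
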